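/- Sign conservation equation: In the data center model, let d and d' be two policies agreeing in all components except at index j with d_{n,j} ≠ d'_{n,j}, both in {0,...,j}. Then π^{(d')}(n,j)[G^{(d)}(n,j) + c] = π^{(d)}(n,j)[G^{(d')}(n,j) + c], and consequently (since the stationary probabilities are positive) the quantities G^{(d)}(n,j) + c and G^{(d')}(n,j) + c have the same sign: (G^{(d)}(n,j)+c)/(G^{(d')}(n,j)+c) = π^{(d)}(n,j)/π^{(d')}(n,j) > 0 whenever G^{(d')}(n,j)+c ≠ 0. -/

import Mathlib

open Finset

/-- Death rate of the data-center birth-death chain at state index `k`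
(states `0..n` are `(k,0)`; states `n+1..n+m` are `(n, k-n)`). -/
noncomputable def dcDeath (n : ℕ) (μ1 μ2 : ℝ) (d : ℕ → ℕ) (k : ℕ) : ℝ :=
  if k ≤ n then (k : ℝ) * μ1
  else (n : ℝ) * μ1 + (min (d (k - n)) (k - n) : ℝ) * μ2

/-- Policy-dependent generator of the data-center birth-death chain. -/
noncomputable def dcGen (n m : ℕ) (lam μ1 μ2 : ℝ) (d : ℕ → ℕ) (k l : ℕ) : ℝ :=
  if l = k + 1 then lam
  else if l + 1 = k then dcDeath n μ1 μ2 d k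
  else if l = k then -((if k < n + m then lam else 0) + dcDeath n μ1 μ2 d k)
  else 0

/-- `π` is a stationary probability vector for the policy-`d` chain. -/
def dcStationary (n m : ℕ) (lam μ1 μ2 : ℝ) (d : ℕ → ℕ) (π : ℕ → ℝ) : Prop :=
  (∀ l ∈ Finset.range (n + m + 1),
    ∑ k ∈ Finset.range (n + m + 1), π k * dcGen n m lam μ1 μ2 d k l = 0) ∧
  (∑ k ∈ Finset.range (n + m + 1), π k = 1) ∧
  (∀ k ∈ Finset.range (n + m + 1), 0 ≤ π k)

/-- Reward (profit rate) function of the data center at state index `k`. -/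
noncomputable def dcReward (n m : ℕ) (lam μ1 μ2 R P1W P2W P2S C1 C21 C22 C3 C4 : ℝ)
    (d : ℕ → ℕ) (k : ℕ) : ℝ :=
  if k ≤ n then
    R * ((k : ℝ) * μ1) - ((n : ℝ) * P1W + (m : ℝ) * P2S) * C1 - (k : ℝ) * C21
  else
    R * ((n : ℝ) * μ1 + (min (k - n) (d (k - n)) : ℝ) * μ2)
      - ((n : ℝ) * P1W + (d (k - n) : ℝ) * P2W + ((m : ℝ) - (d (k - n) : ℝ)) * P2S) * C1
      - ((n : ℝ) * C21 + ((k - n : ℕ) : ℝ) * C22)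
      - (n : ℝ) * μ1 * C3
      - (if k - n = m then lam * C4 else 0)

/-- `g` solves the Poisson equation `B^{(d)} g = η e - f` for the policy-`d` chain. -/
def dcPoisson (n m : ℕ) (lam μ1 μ2 : ℝ) (d : ℕ → ℕ) (f : ℕ → ℝ) (η : ℝ)
    (g : ℕ → ℝ) : Prop :=
  ∀ k ∈ Finset.range (n + m + 1),
    ∑ l ∈ Finset.range (n + m + 1), dcGen n m lam μ1 μ2 d k l * g l = η - f k

/-! Performance difference formula: if two generators differ only in row `k₀`, the gain
difference is `π'(k₀)` times the change of row `k₀` applied to the old bias `g`, plus the change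
of reward at `k₀`. Changing `d` at `j₀` only changes the death rate of state `n + j₀`, by
`(d' j₀ - d j₀) μ₂`, and the reward there, by `(d' j₀ - d j₀) μ₂ c`. Writing the formula in both
directions and adding gives `0 = μ₂ (d' j₀ - d j₀) (π'(n+j₀)(G + c) - π(n+j₀)(G' + c))`, where
`G = g(n+j₀-1) - g(n+j₀)`. The sign statement follows because the stationary distribution of a
birth-death chain with positive rates is positive, by the cut equations `π(l+1) μ(l+1) = π(l) λ`.
-/

section PerformanceDifference

variable {ι : Type*} {s : Finset ι}

theorem sum_mul_sum_eq_zero_of_stationary {π : ι → ℝ} {Q : ι → ι → ℝ}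
    (hπ : ∀ l ∈ s, ∑ k ∈ s, π k * Q k l = 0) (g : ι → ℝ) :
    ∑ k ∈ s, π k * ∑ l ∈ s, Q k l * g l = 0 := by
  simp_rw [Finset.mul_sum, ← mul_assoc]
  rw [Finset.sum_comm]
  exact Finset.sum_eq_zero fun l hl => by rw [← Finset.sum_mul, hπ l hl, zero_mul]

theorem gain_sub_gain_eq_of_rows_eq {k₀ : ι} (hk₀ : k₀ ∈ s) {QA QB : ι → ι → ℝ}
    {fA fB gA πB : ι → ℝ} {ηA : ℝ}
    (hπB : ∀ l ∈ s, ∑ k ∈ s, πB k * QB k l = 0) (hπB_sum : ∑ k ∈ s, πB k = 1)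
    (hgA : ∀ k ∈ s, ∑ l ∈ s, QA k l * gA l = ηA - fA k)
    (hQ : ∀ k ∈ s, k ≠ k₀ → ∀ l, QA k l = QB k l) (hf : ∀ k ∈ s, k ≠ k₀ → fA k = fB k) :
    ∑ k ∈ s, πB k * fB k - ηA
      = πB k₀ * (∑ l ∈ s, (QB k₀ l - QA k₀ l) * gA l + (fB k₀ - fA k₀)) := by
  have hA : ∑ k ∈ s, πB k * ∑ l ∈ s, QA k l * gA l = ηA - ∑ k ∈ s, πB k * fA k := by
    rw [Finset.sum_congr rfl fun k hk => by rw [hgA k hk], Finset.sum_congr rfl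
      fun k _ => mul_sub (πB k) ηA (fA k), Finset.sum_sub_distrib, ← Finset.sum_mul,
      hπB_sum, one_mul]
  have hB := sum_mul_sum_eq_zero_of_stationary hπB gA
  rw [← Finset.sum_eq_single_of_mem (f := fun k =>
      πB k * (∑ l ∈ s, (QB k l - QA k l) * gA l + (fB k - fA k))) k₀ hk₀ fun k hk hne => by
    simp only [hQ k hk hne, hf k hk hne, sub_self, zero_mul, Finset.sum_const_zero, add_zero,
      mul_zero]]
  simp only [sub_mul, Finset.sum_sub_distrib, mul_add, mul_sub, Finset.sum_add_distrib]
  linarith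

end PerformanceDifference

section DataCenter

variable {n m : ℕ} {lam μ1 μ2 : ℝ} {d d' : ℕ → ℕ}

theorem dcDeath_pos (hn : 0 < n) (hμ1 : 0 < μ1) (hμ2 : 0 ≤ μ2) {k : ℕ} (hk : 0 < k) :
    0 < dcDeath n μ1 μ2 d k := by
  unfold dcDeath
  split_ifs with hkn
  · exact mul_pos (by exact_mod_cast hk) hμ1
  · have hnk : (n : ℝ) ≤ k := by exact_mod_cast (by omega : n ≤ k)
    have hmin : (0 : ℝ) ≤ min (d (k - n) : ℝ) (k - n) := le_min (Nat.cast_nonneg _) (by linarith)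
    exact add_pos_of_pos_of_nonneg (mul_pos (by exact_mod_cast hn) hμ1) (mul_nonneg hmin hμ2)

theorem dcDeath_add_of_le {j : ℕ} (hj : 0 < j) (hdj : d j ≤ j) :
    dcDeath n μ1 μ2 d (n + j) = n * μ1 + d j * μ2 := by
  rw [dcDeath, if_neg (by omega), Nat.add_sub_cancel_left, Nat.cast_add, add_sub_cancel_left,
    min_eq_left (by exact_mod_cast hdj)]

theorem dcGen_sum_col_zero (h : 0 < n + m) (π : ℕ → ℝ) :
    ∑ k ∈ Finset.range (n + m + 1), π k * dcGen n m lam μ1 μ2 d k 0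
      = π 1 * dcDeath n μ1 μ2 d 1 - π 0 * lam := by
  have hgen : ∀ k, dcGen n m lam μ1 μ2 d k 0
      = (if k = 1 then dcDeath n μ1 μ2 d 1 else 0) + (if k = 0 then -lam else 0) := by
    intro k
    unfold dcGen
    split_ifs <;> first | (exfalso; omega) | (subst_vars; simp [dcDeath])
  simp only [hgen, mul_add, mul_ite, mul_zero, Finset.sum_add_distrib, Finset.sum_ite_eq',
    Finset.mem_range]
  rw [if_pos (by omega), if_pos (by omega)]
  ring

theorem dcGen_sum_col_succ {l : ℕ} (hl : l + 1 < n + m) (π : ℕ → ℝ) :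
    ∑ k ∈ Finset.range (n + m + 1), π k * dcGen n m lam μ1 μ2 d k (l + 1)
      = (π (l + 2) * dcDeath n μ1 μ2 d (l + 2) - π (l + 1) * lam)
        - (π (l + 1) * dcDeath n μ1 μ2 d (l + 1) - π l * lam) := by
  have hgen : ∀ k, dcGen n m lam μ1 μ2 d k (l + 1)
      = (if k = l then lam else 0) + (if k = l + 2 then dcDeath n μ1 μ2 d (l + 2) else 0)
        + (if k = l + 1 then -(lam + dcDeath n μ1 μ2 d (l + 1)) else 0) := by
    intro k
    unfold dcGen
    split_ifs <;> first | (exfalso; omega) | (subst_vars; simp)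
  simp only [hgen, mul_add, mul_ite, mul_zero, Finset.sum_add_distrib, Finset.sum_ite_eq',
    Finset.mem_range]
  rw [if_pos (by omega), if_pos (by omega), if_pos (by omega)]
  ring

theorem dcStationary.flow_eq {π : ℕ → ℝ} (hπ : dcStationary n m lam μ1 μ2 d π)
    (h : 0 < n + m) {l : ℕ} (hl : l < n + m) :
    π (l + 1) * dcDeath n μ1 μ2 d (l + 1) = π l * lam := by
  induction l with
  | zero =>
    have h0 := hπ.1 0 (by simp)
    rw [dcGen_sum_col_zero h] at h0
    linarith
  | succ l ih =>
    have h1 := hπ.1 (l + 1) (by simp; omega)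
    rw [dcGen_sum_col_succ hl, ih (by omega)] at h1
    linarith

theorem dcStationary.pos {π : ℕ → ℝ} (hπ : dcStationary n m lam μ1 μ2 d π) (hn : 0 < n)
    (hlam : 0 < lam) (hμ1 : 0 < μ1) (hμ2 : 0 ≤ μ2) {k : ℕ} (hk : k ≤ n + m) : 0 < π k := by
  have hstep : ∀ l < n + m, (0 < π (l + 1) ↔ 0 < π l) := fun l hl => by
    rw [← mul_pos_iff_of_pos_right (dcDeath_pos (d := d) hn hμ1 hμ2 l.succ_pos),
      hπ.flow_eq (by omega) hl, mul_pos_iff_of_pos_right hlam]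
  have hpos_iff : ∀ k ≤ n + m, (0 < π k ↔ 0 < π 0) := by
    intro k hk
    induction k with
    | zero => rfl
    | succ k ih => rw [hstep k (by omega), ih (by omega)]
  obtain ⟨j, hj, hπj⟩ : ∃ j ∈ Finset.range (n + m + 1), (0 : ℝ) < π j :=
    Finset.exists_lt_of_sum_lt (by simp [hπ.2.1])
  exact (hpos_iff k hk).2 ((hpos_iff j (by simpa [Nat.lt_succ_iff] using hj)).1 hπj)

variable {j₀ : ℕ}

theorem dcDeath_congr (hagree : ∀ j, j ≠ j₀ → d j = d' j) {k : ℕ} (hk : k ≠ n + j₀) :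
    dcDeath n μ1 μ2 d k = dcDeath n μ1 μ2 d' k := by
  by_cases hkn : k ≤ n
  · simp only [dcDeath, if_pos hkn]
  · simp only [dcDeath, if_neg hkn, hagree (k - n) (by omega)]

theorem dcGen_congr (hagree : ∀ j, j ≠ j₀ → d j = d' j) {k : ℕ} (hk : k ≠ n + j₀)
    (l : ℕ) : dcGen n m lam μ1 μ2 d k l = dcGen n m lam μ1 μ2 d' k l := by
  simp only [dcGen, dcDeath_congr hagree hk]

theorem dcReward_congr {R P1W P2W P2S C1 C21 C22 C3 C4 : ℝ}
    (hagree : ∀ j, j ≠ j₀ → d j = d' j) {k : ℕ} (hk : k ≠ n + j₀) :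
    dcReward n m lam μ1 μ2 R P1W P2W P2S C1 C21 C22 C3 C4 d k
      = dcReward n m lam μ1 μ2 R P1W P2W P2S C1 C21 C22 C3 C4 d' k := by
  by_cases hkn : k ≤ n
  · simp only [dcReward, if_pos hkn]
  · simp only [dcReward, if_neg hkn, hagree (k - n) (by omega)]

theorem dcReward_sub_dcReward {R P1W P2W P2S C1 C21 C22 C3 C4 : ℝ} (hμ2 : μ2 ≠ 0)
    {j : ℕ} (hj : 0 < j) (hdj : d j ≤ j) (hd'j : d' j ≤ j) :
    dcReward n m lam μ1 μ2 R P1W P2W P2S C1 C21 C22 C3 C4 d' (n + j)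
        - dcReward n m lam μ1 μ2 R P1W P2W P2S C1 C21 C22 C3 C4 d (n + j)
      = ((d' j : ℝ) - d j) * μ2 * (R - (P2W - P2S) * C1 / μ2) := by
  simp only [dcReward, if_neg (show ¬n + j ≤ n by omega), Nat.cast_add, add_sub_cancel_left,
    Nat.add_sub_cancel_left, min_eq_right (show (d j : ℝ) ≤ j by exact_mod_cast hdj),
    min_eq_right (show (d' j : ℝ) ≤ j by exact_mod_cast hd'j)]
  field_simp
  ring

theorem sum_dcGen_sub_dcGen_mul {k : ℕ} (hk : 0 < k) (hkN : k ≤ n + m) (g : ℕ → ℝ) :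
    ∑ l ∈ Finset.range (n + m + 1), (dcGen n m lam μ1 μ2 d' k l - dcGen n m lam μ1 μ2 d k l) * g l
      = (dcDeath n μ1 μ2 d' k - dcDeath n μ1 μ2 d k) * (g (k - 1) - g k) := by
  have hrow : ∀ l, dcGen n m lam μ1 μ2 d' k l - dcGen n m lam μ1 μ2 d k l
      = (dcDeath n μ1 μ2 d' k - dcDeath n μ1 μ2 d k)
        * ((if l = k - 1 then 1 else 0) - (if l = k then 1 else 0)) := by
    intro l
    unfold dcGen
    split_ifs <;> first | omega | ring
  simp only [hrow, mul_assoc, ← Finset.mul_sum, sub_mul, ite_mul, one_mul, zero_mul,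
    Finset.sum_sub_distrib, Finset.sum_ite_eq', Finset.mem_range]
  rw [if_pos (by omega), if_pos (by omega)]

theorem gain_sub_gain_of_policy_change {R P1W P2W P2S C1 C21 C22 C3 C4 : ℝ} (hμ2 : μ2 ≠ 0)
    (hj₁ : 0 < j₀) (hj₂ : j₀ ≤ m) (hagree : ∀ j, j ≠ j₀ → d j = d' j)
    (hdj : d j₀ ≤ j₀) (hd'j : d' j₀ ≤ j₀) {π' g : ℕ → ℝ} {η : ℝ}
    (hπ' : dcStationary n m lam μ1 μ2 d' π')
    (hg : dcPoisson n m lam μ1 μ2 d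
      (dcReward n m lam μ1 μ2 R P1W P2W P2S C1 C21 C22 C3 C4 d) η g) :
    ∑ k ∈ Finset.range (n + m + 1),
        π' k * dcReward n m lam μ1 μ2 R P1W P2W P2S C1 C21 C22 C3 C4 d' k - η
      = μ2 * ((d' j₀ : ℝ) - d j₀) * π' (n + j₀)
        * ((g (n + j₀ - 1) - g (n + j₀)) + (R - (P2W - P2S) * C1 / μ2)) := by
  rw [gain_sub_gain_eq_of_rows_eq (by simp; omega) hπ'.1 hπ'.2.1 hg
      (fun k _ hk => dcGen_congr hagree hk) (fun k _ hk => dcReward_congr hagree hk),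
    sum_dcGen_sub_dcGen_mul (by omega) (by omega), dcReward_sub_dcReward hμ2 hj₁ hdj hd'j,
    dcDeath_add_of_le hj₁ hdj, dcDeath_add_of_le hj₁ hd'j]
  ring

end DataCenter

theorem stmt10_general (n m : ℕ) (hn : 1 ≤ n)
    (lam μ1 μ2 R P1W P2W P2S C1 C21 C22 C3 C4 : ℝ)
    (hlam : 0 < lam) (hμ1 : 0 < μ1) (hμ2 : 0 < μ2)
    (j0 : ℕ) (hj1 : 1 ≤ j0) (hj2 : j0 ≤ m)
    (d d' : ℕ → ℕ)
    (hagree : ∀ j, j ≠ j0 → d j = d' j)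
    (hdle : d j0 ≤ j0) (hd'le : d' j0 ≤ j0) (hne : d j0 ≠ d' j0)
    (π π' : ℕ → ℝ)
    (hπ : dcStationary n m lam μ1 μ2 d π)
    (hπ' : dcStationary n m lam μ1 μ2 d' π')
    (η η' : ℝ)
    (hη : η = ∑ k ∈ Finset.range (n + m + 1),
      π k * dcReward n m lam μ1 μ2 R P1W P2W P2S C1 C21 C22 C3 C4 d k)
    (hη' : η' = ∑ k ∈ Finset.range (n + m + 1),
      π' k * dcReward n m lam μ1 μ2 R P1W P2W P2S C1 C21 C22 C3 C4 d' k)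
    (g g' : ℕ → ℝ)
    (hg : dcPoisson n m lam μ1 μ2 d
      (dcReward n m lam μ1 μ2 R P1W P2W P2S C1 C21 C22 C3 C4 d) η g)
    (hg' : dcPoisson n m lam μ1 μ2 d'
      (dcReward n m lam μ1 μ2 R P1W P2W P2S C1 C21 C22 C3 C4 d') η' g')
    (c : ℝ) (hc : c = R - (P2W - P2S) * C1 / μ2) :
    π' (n + j0) * ((g (n + j0 - 1) - g (n + j0)) + c)
        = π (n + j0) * ((g' (n + j0 - 1) - g' (n + j0)) + c) ∧
    ((g' (n + j0 - 1) - g' (n + j0)) + c ≠ 0 →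
      ((g (n + j0 - 1) - g (n + j0)) + c) / ((g' (n + j0 - 1) - g' (n + j0)) + c)
          = π (n + j0) / π' (n + j0) ∧
      0 < ((g (n + j0 - 1) - g (n + j0)) + c)
          / ((g' (n + j0 - 1) - g' (n + j0)) + c)) := by
  have hgain := gain_sub_gain_of_policy_change hμ2.ne' hj1 hj2 hagree hdle hd'le hπ' hg
  have hgain' := gain_sub_gain_of_policy_change hμ2.ne' hj1 hj2
    (fun j hj => (hagree j hj).symm) hd'le hdle hπ hg'
  rw [← hη', ← hc] at hgain
  rw [← hη, ← hc] at hgain'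
  have hΔ : μ2 * ((d' j0 : ℝ) - d j0) ≠ 0 :=
    mul_ne_zero hμ2.ne' (sub_ne_zero.2 (by exact_mod_cast hne.symm))
  have key : π' (n + j0) * ((g (n + j0 - 1) - g (n + j0)) + c)
      = π (n + j0) * ((g' (n + j0 - 1) - g' (n + j0)) + c) :=
    mul_left_cancel₀ hΔ (by linear_combination -hgain - hgain')
  have hp := hπ.pos hn hlam hμ1 hμ2.le (k := n + j0) (by omega)
  have hp' := hπ'.pos hn hlam hμ1 hμ2.le (k := n + j0) (by omega)
  refine ⟨key, fun h0 => ?_⟩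
  have hratio : ((g (n + j0 - 1) - g (n + j0)) + c) / ((g' (n + j0 - 1) - g' (n + j0)) + c)
      = π (n + j0) / π' (n + j0) := by
    rw [div_eq_div_iff h0 hp'.ne']
    linear_combination key
  exact ⟨hratio, hratio ▸ div_pos hp hp'⟩

/-- sign conservation equation: for two policies agreeing except
at `j0` (both values in `{0,...,j0}`, distinct),
`π^{(d')}(n,j0)[G^{(d)}(n,j0)+c] = π^{(d)}(n,j0)[G^{(d')}(n,j0)+c]`, and the two
bracketed quantities have the same sign: if `G^{(d')}(n,j0)+c ≠ 0` then their
ratio equals `π^{(d)}(n,j0)/π^{(d')}(n,j0) > 0`. -/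
theorem stmt10 (n m : ℕ) (hn : 1 ≤ n) (hm : 1 ≤ m)
    (lam μ1 μ2 R P1W P2W P2S C1 C21 C22 C3 C4 : ℝ)
    (hlam : 0 < lam) (hμ1 : 0 < μ1) (hμ2 : 0 < μ2)
    (hP2S : 0 < P2S) (hP : P2S < P2W) (hC1 : 0 < C1)
    (j0 : ℕ) (hj1 : 1 ≤ j0) (hj2 : j0 ≤ m)
    (d d' : ℕ → ℕ) (hd : ∀ j, d j ≤ m) (hd' : ∀ j, d' j ≤ m)
    (hagree : ∀ j, j ≠ j0 → d j = d' j)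
    (hdle : d j0 ≤ j0) (hd'le : d' j0 ≤ j0) (hne : d j0 ≠ d' j0)
    (π π' : ℕ → ℝ)
    (hπ : dcStationary n m lam μ1 μ2 d π)
    (hπ' : dcStationary n m lam μ1 μ2 d' π')
    (η η' : ℝ)
    (hη : η = ∑ k ∈ Finset.range (n + m + 1),
      π k * dcReward n m lam μ1 μ2 R P1W P2W P2S C1 C21 C22 C3 C4 d k)
    (hη' : η' = ∑ k ∈ Finset.range (n + m + 1),
      π' k * dcReward n m lam μ1 μ2 R P1W P2W P2S C1 C21 C22 C3 C4 d' k)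
    (g g' : ℕ → ℝ)
    (hg : dcPoisson n m lam μ1 μ2 d
      (dcReward n m lam μ1 μ2 R P1W P2W P2S C1 C21 C22 C3 C4 d) η g)
    (hg' : dcPoisson n m lam μ1 μ2 d'
      (dcReward n m lam μ1 μ2 R P1W P2W P2S C1 C21 C22 C3 C4 d') η' g')
    (c : ℝ) (hc : c = R - (P2W - P2S) * C1 / μ2) :
    π' (n + j0) * ((g (n + j0 - 1) - g (n + j0)) + c)
        = π (n + j0) * ((g' (n + j0 - 1) - g' (n + j0)) + c) ∧
    ((g' (n + j0 - 1) - g' (n + j0)) + c ≠ 0 →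
      ((g (n + j0 - 1) - g (n + j0)) + c) / ((g' (n + j0 - 1) - g' (n + j0)) + c)
          = π (n + j0) / π' (n + j0) ∧
      0 < ((g (n + j0 - 1) - g (n + j0)) + c)
          / ((g' (n + j0 - 1) - g' (n + j0)) + c)) :=
  stmt10_general n m hn lam μ1 μ2 R P1W P2W P2S C1 C21 C22 C3 C4 hlam hμ1 hμ2 j0 hj1 hj2 d d' hagree
    hdle hd'le hne π π' hπ hπ' η η' hη hη' g g' hg hg' c hc
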